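/- arXiv:2405.12263 — 2 statements merged into one kernel-verified Lean document; each statement's English description precedes it below -/
import Mathlib

section
/- For every integer n ≥ 7, the cycle-star graph CS_{5,n−5} admits an edge irregular (n−3)-labeling; that is, there exists a vertex labeling φ : V(CS_{5,n−5}) → {1,2,...,n−3} such that the weights w_φ(uv) = φ(u)+φ(v) of the n edges are pairwise distinct. -/
/-- The weight of an edge under a vertex labeling `φ`: the sum of the labels
of its two endpoints. -/
def edgeWeight {V : Type*} (φ : V → ℕ) : Sym2 V → ℕ :=
  Sym2.lift ⟨fun u v => φ u + φ v, fun u v => Nat.add_comm _ _⟩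

/-- `φ` is an edge irregular `k`-labeling of `G`: it is a vertex labeling with
labels in `{1, …, k}` such that distinct edges get distinct weights. -/
def IsEdgeIrregularLabeling {V : Type*} (G : SimpleGraph V) (k : ℕ) (φ : V → ℕ) : Prop :=
  (∀ v, φ v ∈ Finset.Icc 1 k) ∧ Set.InjOn (edgeWeight φ) G.edgeSet

/-- The edge irregularity strength of `G`: the least `k` for which `G` admits
an edge irregular `k`-labeling. -/
noncomputable def edgeIrregularityStrength {V : Type*} (G : SimpleGraph V) : ℕ :=
  sInf {k | ∃ φ : V → ℕ, IsEdgeIrregularLabeling G k φ}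

/-- The cycle-star graph `CS_{k, n-k}` on `n` vertices: vertices `0, …, k-1`
form a cycle of length `k`, and the remaining `n - k` vertices are pendant
leaves all attached to vertex `0` of the cycle. -/
def cycleStar (k n : ℕ) : SimpleGraph (Fin n) :=
  SimpleGraph.fromRel (fun i j =>
    (i.val < k ∧ j.val < k ∧ j.val = (i.val + 1) % k) ∨ (i.val = 0 ∧ k ≤ j.val))

set_option maxHeartbeats 4000000 in
theorem cycleStar_five_labeling (n : ℕ) (hn : 7 ≤ n) :
    ∃ φ : Fin n → ℕ, IsEdgeIrregularLabeling (cycleStar 5 n) (n - 3) φ := by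
  set P : Fin n → ℕ := fun i =>
    if i.val = 0 then n - 3 else if i.val ≤ 2 then 1 else if i.val ≤ 4 then 2 else i.val - 2
    with hP
  have char : ∀ x : Fin n, (x.val = 0 ∧ P x = n - 3) ∨ (1 ≤ x.val ∧ x.val ≤ 2 ∧ P x = 1) ∨
      (3 ≤ x.val ∧ x.val ≤ 4 ∧ P x = 2) ∨ (5 ≤ x.val ∧ P x = x.val - 2) := by
    intro x
    simp only [hP]
    split_ifs <;> omega
  refine ⟨P, ?_, ?_⟩
  · intro v
    have := v.isLt
    simp only [hP, Finset.mem_Icc]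
    split_ifs <;> omega
  · have key : ∀ a b c d : Fin n, (cycleStar 5 n).Adj a b → (cycleStar 5 n).Adj c d →
        P a + P b = P c + P d → s(a, b) = s(c, d) := by
      intro a b c d hab hcd hw
      simp only [cycleStar, SimpleGraph.fromRel_adj, ne_eq, Fin.ext_iff] at hab hcd
      rw [Sym2.eq_iff]
      simp only [Fin.ext_iff]
      have ca := char a; have cb := char b; have cc := char c; have cd' := char d
      omega
    intro e he f hf hef
    revert he hf hef
    induction e, f using Sym2.inductionOn₂ with
    | _ a b c d =>
      intro he hf hef
      rw [SimpleGraph.mem_edgeSet] at he hf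
      simp only [edgeWeight, Sym2.lift_mk] at hef
      exact key a b c d he hf hef
end

section
/- For every integer n ≥ 11, the cycle-star graph CS_{7,n−7} admits an edge irregular (n−5)-labeling; that is, there exists a vertex labeling φ : V(CS_{7,n−7}) → {1,2,...,n−5} such that the weights w_φ(uv) = φ(u)+φ(v) of the n edges are pairwise distinct. -/
/-- The labeling used for `n ≥ 12`. -/
def csLabel (n : ℕ) (i : Fin n) : ℕ :=
  if i.val = 0 then 1 else if i.val = 1 then n-6 else if i.val = 2 then 3
  else if i.val = 3 then n-5 else if i.val = 4 then 5 else if i.val = 5 then n-6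
  else if i.val = 6 then n-5 else i.val - 6

/-- The labeling used for `n = 11`. -/
def csLabel11 (i : Fin 11) : ℕ :=
  if i.val = 0 then 1 else if i.val = 1 then 4 else if i.val = 2 then 4
  else if i.val = 3 then 5 else if i.val = 4 then 5 else if i.val = 5 then 6
  else if i.val = 6 then 6 else if i.val = 10 then 5 else i.val - 6

lemma csLabel_shape (n : ℕ) (a b : Fin n)
    (h : (a.val < 7 ∧ b.val < 7 ∧ b.val = (a.val + 1) % 7) ∨ (a.val = 0 ∧ 7 ≤ b.val)) :
    (a.val = 0 ∧ b.val = 1 ∧ csLabel n a + csLabel n b = 1 + (n-6)) ∨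
    (a.val = 1 ∧ b.val = 2 ∧ csLabel n a + csLabel n b = (n-6) + 3) ∨
    (a.val = 2 ∧ b.val = 3 ∧ csLabel n a + csLabel n b = 3 + (n-5)) ∨
    (a.val = 3 ∧ b.val = 4 ∧ csLabel n a + csLabel n b = (n-5) + 5) ∨
    (a.val = 4 ∧ b.val = 5 ∧ csLabel n a + csLabel n b = 5 + (n-6)) ∨
    (a.val = 5 ∧ b.val = 6 ∧ csLabel n a + csLabel n b = (n-6) + (n-5)) ∨
    (a.val = 6 ∧ b.val = 0 ∧ csLabel n a + csLabel n b = (n-5) + 1) ∨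
    (a.val = 0 ∧ 7 ≤ b.val ∧ b.val < n ∧ csLabel n a + csLabel n b = 1 + (b.val - 6)) := by
  have hb := b.isLt
  rcases h with ⟨ha7, hb7, hab⟩ | ⟨ha, hb7⟩
  · have : a.val = 0 ∧ b.val = 1 ∨ a.val = 1 ∧ b.val = 2 ∨ a.val = 2 ∧ b.val = 3 ∨
        a.val = 3 ∧ b.val = 4 ∨ a.val = 4 ∧ b.val = 5 ∨ a.val = 5 ∧ b.val = 6 ∨
        a.val = 6 ∧ b.val = 0 := by omega
    rcases this with ⟨h1,h2⟩|⟨h1,h2⟩|⟨h1,h2⟩|⟨h1,h2⟩|⟨h1,h2⟩|⟨h1,h2⟩|⟨h1,h2⟩ <;>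
      simp [csLabel, h1, h2]
  · have hφa : csLabel n a = 1 := by simp [csLabel, ha]
    have hφb : csLabel n b = b.val - 6 := by
      unfold csLabel; split_ifs <;> omega
    exact Or.inr (Or.inr (Or.inr (Or.inr (Or.inr (Or.inr (Or.inr ⟨ha, hb7, hb, by omega⟩))))))

lemma csLabel11_shape (a b : Fin 11)
    (h : (a.val < 7 ∧ b.val < 7 ∧ b.val = (a.val + 1) % 7) ∨ (a.val = 0 ∧ 7 ≤ b.val)) :
    (a.val = 0 ∧ b.val = 1 ∧ csLabel11 a + csLabel11 b = 5) ∨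
    (a.val = 1 ∧ b.val = 2 ∧ csLabel11 a + csLabel11 b = 8) ∨
    (a.val = 2 ∧ b.val = 3 ∧ csLabel11 a + csLabel11 b = 9) ∨
    (a.val = 3 ∧ b.val = 4 ∧ csLabel11 a + csLabel11 b = 10) ∨
    (a.val = 4 ∧ b.val = 5 ∧ csLabel11 a + csLabel11 b = 11) ∨
    (a.val = 5 ∧ b.val = 6 ∧ csLabel11 a + csLabel11 b = 12) ∨
    (a.val = 6 ∧ b.val = 0 ∧ csLabel11 a + csLabel11 b = 7) ∨
    (a.val = 0 ∧ b.val = 7 ∧ csLabel11 a + csLabel11 b = 2) ∨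
    (a.val = 0 ∧ b.val = 8 ∧ csLabel11 a + csLabel11 b = 3) ∨
    (a.val = 0 ∧ b.val = 9 ∧ csLabel11 a + csLabel11 b = 4) ∨
    (a.val = 0 ∧ b.val = 10 ∧ csLabel11 a + csLabel11 b = 6) := by
  have hb := b.isLt
  rcases h with ⟨ha7, hb7, hab⟩ | ⟨ha, hb7⟩
  · have : a.val = 0 ∧ b.val = 1 ∨ a.val = 1 ∧ b.val = 2 ∨ a.val = 2 ∧ b.val = 3 ∨
        a.val = 3 ∧ b.val = 4 ∨ a.val = 4 ∧ b.val = 5 ∨ a.val = 5 ∧ b.val = 6 ∨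
        a.val = 6 ∧ b.val = 0 := by omega
    rcases this with ⟨h1,h2⟩|⟨h1,h2⟩|⟨h1,h2⟩|⟨h1,h2⟩|⟨h1,h2⟩|⟨h1,h2⟩|⟨h1,h2⟩ <;>
      simp [csLabel11, h1, h2]
  · have : b.val = 7 ∨ b.val = 8 ∨ b.val = 9 ∨ b.val = 10 := by omega
    rcases this with h2|h2|h2|h2 <;> simp [csLabel11, ha, h2]

lemma injOn_aux (n : ℕ) (φ : Fin n → ℕ)
    (h : ∀ a b c d : Fin n,
      (((a.val < 7 ∧ b.val < 7 ∧ b.val = (a.val + 1) % 7) ∨ (a.val = 0 ∧ 7 ≤ b.val)) ∨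
       ((b.val < 7 ∧ a.val < 7 ∧ a.val = (b.val + 1) % 7) ∨ (b.val = 0 ∧ 7 ≤ a.val))) →
      (((c.val < 7 ∧ d.val < 7 ∧ d.val = (c.val + 1) % 7) ∨ (c.val = 0 ∧ 7 ≤ d.val)) ∨
       ((d.val < 7 ∧ c.val < 7 ∧ c.val = (d.val + 1) % 7) ∨ (d.val = 0 ∧ 7 ≤ c.val))) →
      φ a + φ b = φ c + φ d → s(a,b) = s(c,d)) :
    Set.InjOn (edgeWeight φ) (cycleStar 7 n).edgeSet := by
  intro e he f hf hw
  induction e using Sym2.ind with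
  | _ a b =>
  induction f using Sym2.ind with
  | _ c d =>
  rw [SimpleGraph.mem_edgeSet, cycleStar, SimpleGraph.fromRel_adj] at he hf
  exact h a b c d he.2 hf.2 hw

set_option maxHeartbeats 1600000 in
theorem cycleStar_seven_labeling (n : ℕ) (hn : 11 ≤ n) :
    ∃ φ : Fin n → ℕ, IsEdgeIrregularLabeling (cycleStar 7 n) (n - 5) φ := by
  by_cases h11 : n = 11
  · subst h11
    refine ⟨csLabel11, ?_, injOn_aux 11 csLabel11 ?_⟩
    · intro v
      have := v.isLt
      simp only [Finset.mem_Icc]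
      unfold csLabel11; split_ifs <;> omega
    · intro a b c d he hf hw
      have D1 := he.elim (fun h => Or.inl (csLabel11_shape a b h))
        (fun h => Or.inr (csLabel11_shape b a h))
      have D2 := hf.elim (fun h => Or.inl (csLabel11_shape c d h))
        (fun h => Or.inr (csLabel11_shape d c h))
      rw [Sym2.eq_iff]
      simp only [Fin.ext_iff]
      omega
  · have hn12 : 12 ≤ n := by omega
    refine ⟨csLabel n, ?_, injOn_aux n (csLabel n) ?_⟩
    · intro v
      have := v.isLt
      simp only [Finset.mem_Icc]
      unfold csLabel; split_ifs <;> omega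
    · intro a b c d he hf hw
      have D1 := he.elim (fun h => Or.inl (csLabel_shape n a b h))
        (fun h => Or.inr (csLabel_shape n b a h))
      have D2 := hf.elim (fun h => Or.inl (csLabel_shape n c d h))
        (fun h => Or.inr (csLabel_shape n d c h))
      rw [Sym2.eq_iff]
      simp only [Fin.ext_iff]
      omega
end
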